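/- arXiv:1808.02404 — 10 statements merged into one kernel-verified Lean document; each statement's English description precedes it below -/
import Mathlib

section
/- Let G be a group acting by homeomorphisms on a compact Hausdorff space X. If F is a closed subset and A is an open subset with F ≺ A (i.e., there exist finitely many open sets U₁,...,Uₙ covering F and group elements g₁,...,gₙ such that the sets gᵢUᵢ are pairwise disjoint subsets of A), then there exists an open set M with F ≺ M and the closure of M contained in A. -/
open Pointwise

/-- `Subeq G F O`: the set `F` is subequivalent to `O`, i.e. there is a finite family of
open sets covering `F` and group elements translating them to pairwise disjoint subsets of `O`. -/
def Subeq (G : Type*) {X : Type*} [Group G] [MulAction G X] [TopologicalSpace X]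
    (F O : Set X) : Prop :=
  ∃ (n : ℕ) (U : Fin n → Set X) (g : Fin n → G),
    (∀ i, IsOpen (U i)) ∧ F ⊆ ⋃ i, U i ∧ (∀ i, g i • U i ⊆ O) ∧
      Pairwise fun i j => Disjoint (g i • U i) (g j • U j)

/-- Shrink the witnessing cover to `W` with `closure (W i) ⊆ U i`; the translates of `W` then
witness `F ≺ ⋃ i, g i • W i`, and this finite union has closure `⋃ i, g i • closure (W i)`. -/
theorem Subeq.exists_isOpen_closure_subset {G X : Type*} [Group G] [TopologicalSpace X]
    [NormalSpace X] [MulAction G X] [ContinuousConstSMul G X] {F A : Set X}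
    (hF : IsClosed F) (h : Subeq G F A) :
    ∃ M : Set X, IsOpen M ∧ Subeq G F M ∧ closure M ⊆ A := by
  obtain ⟨n, U, g, hU, hFU, hUA, hdisj⟩ := h
  obtain ⟨W, hFW, hW, hWU⟩ := exists_subset_iUnion_closure_subset hF hU
    (fun _ _ => Set.toFinite _) hFU
  have hWU' : ∀ i, W i ⊆ U i := fun i => subset_closure.trans (hWU i)
  refine ⟨⋃ i, g i • W i, isOpen_iUnion fun i => (hW i).smul _,
    ⟨n, W, g, hW, hFW, Set.subset_iUnion (fun i => g i • W i),
      fun i j hij => (hdisj hij).mono (Set.smul_set_mono (hWU' i)) (Set.smul_set_mono (hWU' j))⟩,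
    ?_⟩
  rw [closure_iUnion_of_finite]
  refine Set.iUnion_subset fun i => ?_
  rw [closure_smul]
  exact (Set.smul_set_mono (hWU i)).trans (hUA i)

theorem subeq_exists_open_closure_subset_general
    {G X : Type*} [Group G] [TopologicalSpace X] [CompactSpace X] [T2Space X]
    [MulAction G X] [ContinuousConstSMul G X]
    (F A : Set X) (hF : IsClosed F) (h : Subeq G F A) :
    ∃ M : Set X, IsOpen M ∧ Subeq G F M ∧ closure M ⊆ A :=
  h.exists_isOpen_closure_subset hF

theorem subeq_exists_open_closure_subset
    {G X : Type*} [Group G] [TopologicalSpace X] [CompactSpace X] [T2Space X]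
    [MulAction G X] [ContinuousConstSMul G X]
    (F A : Set X) (hF : IsClosed F) (hA : IsOpen A) (h : Subeq G F A) :
    ∃ M : Set X, IsOpen M ∧ Subeq G F M ∧ closure M ⊆ A :=
  subeq_exists_open_closure_subset_general F A hF h
end

section
/- Let G be a group acting by homeomorphisms on a compact Hausdorff space X. If F is closed, N and B are open, F ≺ N, and the closure of N satisfies closure(N) ≺ B, then F ≺ B. -/
open Pointwise

namespace Subeq

variable {G X : Type*} [Group G] [MulAction G X] [TopologicalSpace X]

theorem of_fintype {ι : Type*} [Fintype ι] {F O : Set X} (U : ι → Set X) (g : ι → G)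
    (hU : ∀ i, IsOpen (U i)) (hFU : F ⊆ ⋃ i, U i) (hUO : ∀ i, g i • U i ⊆ O)
    (hdisj : Pairwise fun i j => Disjoint (g i • U i) (g j • U j)) : Subeq G F O := by
  let e := (Fintype.equivFin ι).symm
  refine ⟨Fintype.card ι, U ∘ e, g ∘ e, fun k => hU (e k), ?_, fun k => hUO (e k),
    hdisj.comp_of_injective e.injective⟩
  rwa [Function.comp_def, e.surjective.iUnion_comp U]

theorem mono_left {F F' O : Set X} (hF : F' ⊆ F) (h : Subeq G F O) : Subeq G F' O :=
  let ⟨n, U, g, hU, hFU, hUO, hdisj⟩ := h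
  ⟨n, U, g, hU, hF.trans hFU, hUO, hdisj⟩

/- A point of `U i` is sent by `g i` into some `V j`; the refined pieces are indexed by such
pairs `(i, j)` and moved by `v j * g i`. -/
theorem trans [ContinuousConstSMul G X] {F N B : Set X} (hFN : Subeq G F N)
    (hNB : Subeq G N B) : Subeq G F B := by
  obtain ⟨n, U, g, hU, hFU, hUN, hUdisj⟩ := hFN
  obtain ⟨m, V, v, hV, hNV, hVB, hVdisj⟩ := hNB
  have hpiece : ∀ i j, (v j * g i) • (U i ∩ (g i)⁻¹ • V j) = v j • (g i • U i ∩ V j) :=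
    fun i j => by rw [mul_smul, Set.smul_set_inter, smul_inv_smul]
  refine of_fintype (ι := Fin n × Fin m) (fun p => U p.1 ∩ (g p.1)⁻¹ • V p.2)
    (fun p => v p.2 * g p.1) (fun p => (hU _).inter ((hV _).smul _)) ?cover ?sub ?disj
  case cover =>
    intro x hx
    obtain ⟨i, hxi⟩ := Set.mem_iUnion.1 (hFU hx)
    obtain ⟨j, hxj⟩ := Set.mem_iUnion.1 (hNV (hUN i (Set.smul_mem_smul_set hxi)))
    exact Set.mem_iUnion.2 ⟨(i, j), hxi, Set.mem_inv_smul_set_iff.2 hxj⟩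
  case sub =>
    rintro ⟨i, j⟩
    rw [hpiece]
    exact (Set.smul_set_mono Set.inter_subset_right).trans (hVB j)
  case disj =>
    rintro ⟨i, j⟩ ⟨i', j'⟩ hne
    simp only [hpiece]
    rcases eq_or_ne j j' with rfl | hj
    · have hi : i ≠ i' := fun h => hne (h ▸ rfl)
      exact Set.disjoint_smul_set.2 <|
        (hUdisj hi).mono Set.inter_subset_left Set.inter_subset_left
    · exact (hVdisj hj).mono (Set.smul_set_mono Set.inter_subset_right)
        (Set.smul_set_mono Set.inter_subset_right)

end Subeq

theorem subeq_trans_closure_general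
    {G X : Type*} [Group G] [TopologicalSpace X]
    [MulAction G X] [ContinuousConstSMul G X]
    (F N B : Set X)
    (h1 : Subeq G F N) (h2 : Subeq G (closure N) B) : Subeq G F B :=
  h1.trans (h2.mono_left subset_closure)

theorem subeq_trans_closure
    {G X : Type*} [Group G] [TopologicalSpace X] [CompactSpace X] [T2Space X]
    [MulAction G X] [ContinuousConstSMul G X]
    (F N B : Set X) (hF : IsClosed F) (hN : IsOpen N) (hB : IsOpen B)
    (h1 : Subeq G F N) (h2 : Subeq G (closure N) B) : Subeq G F B :=
  subeq_trans_closure_general F N B h1 h2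
end

section
/- Let G be a group acting by homeomorphisms on a compact Hausdorff space X. The subequivalence relation on open sets is transitive: if A ≺ B and B ≺ C for nonempty open sets A, B, C, then A ≺ C. -/
/-!
Given `F ≺ B` via pieces `Uᵢ` moved by `gᵢ`, shrink the `Uᵢ` to closed `Vᵢ` still covering `F`
(compact Hausdorff spaces are normal). Then `K = ⋃ gᵢ • Vᵢ` is a closed subset of `B`, so `K ≺ C`
via pieces `Wⱼ` moved by `hⱼ`, and the pieces `Uᵢ ∩ gᵢ⁻¹ • Wⱼ` moved by `hⱼ gᵢ` witness `F ≺ C`.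
-/

open Pointwise

/-- Subequivalence for open sets: `V ≺ O` iff every closed subset of `V` is subequivalent to `O`. -/
def SubeqOpen (G : Type*) {X : Type*} [Group G] [MulAction G X] [TopologicalSpace X]
    (V O : Set X) : Prop :=
  ∀ F : Set X, IsClosed F → F ⊆ V → Subeq G F O

section

variable {G X : Type*} [Group G] [MulAction G X] [TopologicalSpace X]

theorem subeq_of_finite {F O : Set X} {ι : Type*} [Finite ι] (U : ι → Set X) (g : ι → G)
    (hU : ∀ i, IsOpen (U i)) (hFU : F ⊆ ⋃ i, U i) (hUO : ∀ i, g i • U i ⊆ O)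
    (hd : Pairwise fun i j => Disjoint (g i • U i) (g j • U j)) : Subeq G F O := by
  obtain ⟨n, ⟨e⟩⟩ := Finite.exists_equiv_fin ι
  refine ⟨n, U ∘ e.symm, g ∘ e.symm, fun _ => hU _, ?_, fun _ => hUO _,
    fun _ _ hkl => hd (e.symm.injective.ne hkl)⟩
  rwa [Function.comp_def, e.symm.surjective.iUnion_comp U]

theorem Subeq.mono_left_s2 {F F' O : Set X} (hF : F ⊆ F') (h : Subeq G F' O) : Subeq G F O := by
  obtain ⟨n, U, g, hU, hFU, hUO, hd⟩ := h
  exact ⟨n, U, g, hU, hF.trans hFU, hUO, hd⟩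

theorem Subeq.iUnion_inter_inv_smul [ContinuousConstSMul G X] {K C : Set X} {n : ℕ}
    (U : Fin n → Set X) (g : Fin n → G) (hU : ∀ i, IsOpen (U i))
    (hd : Pairwise fun i j => Disjoint (g i • U i) (g j • U j)) (hK : Subeq G K C) :
    Subeq G (⋃ i, U i ∩ (g i)⁻¹ • K) C := by
  obtain ⟨m, W, h, hW, hKW, hWC, hWd⟩ := hK
  have image_subset (p : Fin n × Fin m) :
      (h p.2 * g p.1) • (U p.1 ∩ (g p.1)⁻¹ • W p.2) ⊆ h p.2 • W p.2 := by
    rw [mul_smul]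
    exact Set.smul_set_mono ((Set.smul_set_mono Set.inter_subset_right).trans
      (smul_inv_smul _ _).subset)
  refine subeq_of_finite (fun p => U p.1 ∩ (g p.1)⁻¹ • W p.2) (fun p => h p.2 * g p.1)
    (fun p => (hU _).inter ((hW _).smul _)) ?_ (fun p => (image_subset p).trans (hWC _)) ?_
  · simp only [Set.iUnion_subset_iff]
    rintro i x ⟨hxU, y, hyK, rfl⟩
    obtain ⟨j, hj⟩ := Set.mem_iUnion.1 (hKW hyK)
    exact Set.mem_iUnion.2 ⟨(i, j), hxU, Set.smul_mem_smul_set hj⟩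
  · rintro ⟨i, j⟩ ⟨i', j'⟩ hne
    rcases eq_or_ne j j' with rfl | hj
    · have hi : i ≠ i' := fun e => hne (by rw [e])
      simp only [mul_smul]
      exact (Set.disjoint_smul_set.2 (hd hi)).mono
        (Set.smul_set_mono (Set.smul_set_mono Set.inter_subset_left))
        (Set.smul_set_mono (Set.smul_set_mono Set.inter_subset_left))
    · exact (hWd hj).mono (image_subset (i, j)) (image_subset (i', j'))

theorem Subeq.trans_subeqOpen [NormalSpace X] [ContinuousConstSMul G X] {F B C : Set X}
    (hF : IsClosed F) (hFB : Subeq G F B) (hBC : SubeqOpen G B C) : Subeq G F C := by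
  obtain ⟨n, U, g, hU, hFU, hUB, hd⟩ := hFB
  obtain ⟨V, hFV, hV, hVU⟩ :=
    exists_subset_iUnion_closed_subset hF hU (fun _ _ => Set.toFinite _) hFU
  set K := ⋃ i, g i • V i
  have hK : IsClosed K := isClosed_iUnion_of_finite fun i => (hV i).smul _
  have hKB : K ⊆ B := Set.iUnion_subset fun i => (Set.smul_set_mono (hVU i)).trans (hUB i)
  refine (Subeq.iUnion_inter_inv_smul U g hU hd (hBC K hK hKB)).mono_left_s2 fun x hx => ?_
  obtain ⟨i, hi⟩ := Set.mem_iUnion.1 (hFV hx)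
  refine Set.mem_iUnion.2 ⟨i, hVU i hi, Set.mem_inv_smul_set_iff.2 ?_⟩
  exact Set.mem_iUnion.2 ⟨i, Set.smul_mem_smul_set hi⟩

end

theorem subeqOpen_trans_general
    {G X : Type*} [Group G] [TopologicalSpace X] [CompactSpace X] [T2Space X]
    [MulAction G X] [ContinuousConstSMul G X]
    (A B C : Set X)
    (hAB : SubeqOpen G A B) (hBC : SubeqOpen G B C) : SubeqOpen G A C :=
  fun F hF hFA => (hAB F hF hFA).trans_subeqOpen hF hBC

theorem subeqOpen_trans
    {G X : Type*} [Group G] [TopologicalSpace X] [CompactSpace X] [T2Space X]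
    [MulAction G X] [ContinuousConstSMul G X]
    (A B C : Set X) (hA : IsOpen A) (hB : IsOpen B) (hC : IsOpen C)
    (hAne : A.Nonempty) (hBne : B.Nonempty) (hCne : C.Nonempty)
    (hAB : SubeqOpen G A B) (hBC : SubeqOpen G B C) : SubeqOpen G A C :=
  subeqOpen_trans_general A B C hAB hBC
end

section
/- Let G be a group acting by homeomorphisms on a compact Hausdorff space X, and suppose the action has paradoxical comparison. Then there is no G-invariant regular Borel probability measure on X. -/
open Pointwise MeasureTheory

/-- The action has paradoxical comparison: every closed subset of a nonempty open set `O`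
is subequivalent to each of two disjoint nonempty open subsets of `O`. -/
def ParadoxicalComparison (G : Type*) {X : Type*} [Group G] [MulAction G X]
    [TopologicalSpace X] : Prop :=
  ∀ O : Set X, IsOpen O → O.Nonempty → ∀ F : Set X, IsClosed F → F ⊆ O →
    ∃ O₁ O₂ : Set X, IsOpen O₁ ∧ IsOpen O₂ ∧ O₁.Nonempty ∧ O₂.Nonempty ∧
      O₁ ⊆ O ∧ O₂ ⊆ O ∧ Disjoint O₁ O₂ ∧ Subeq G F O₁ ∧ Subeq G F O₂

/-
Subequivalence cannot increase the mass of an invariant measure. Taking `F = O = X` in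
paradoxical comparison makes `X` subequivalent to each of two disjoint open sets, so
`2 μ(X) ≤ μ(X)`, which forces `μ(X) = 0` for a finite measure.
-/

section

variable {G X : Type*} [Group G] [TopologicalSpace X] [MulAction G X] [ContinuousConstSMul G X]
  [MeasurableSpace X] [OpensMeasurableSpace X] {μ : Measure X}

theorem Subeq.measure_le (hμ : ∀ (g : G) (U : Set X), IsOpen U → μ (g • U) = μ U)
    {F O : Set X} (h : Subeq G F O) : μ F ≤ μ O := by
  obtain ⟨n, U, g, hU, hFU, hgUO, hdisj⟩ := h
  calc μ F ≤ μ (⋃ i, U i) := measure_mono hFU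
    _ ≤ ∑ i, μ (U i) := measure_iUnion_fintype_le μ U
    _ = ∑ i, μ (g i • U i) := by simp only [hμ _ _ (hU _)]
    _ = μ (⋃ i, g i • U i) := by
        rw [measure_iUnion hdisj fun i => ((hU i).smul (g i)).measurableSet, tsum_fintype]
    _ ≤ μ O := measure_mono (Set.iUnion_subset hgUO)

theorem ParadoxicalComparison.measure_univ_eq_zero [IsFiniteMeasure μ]
    (h : ParadoxicalComparison G (X := X))
    (hμ : ∀ (g : G) (U : Set X), IsOpen U → μ (g • U) = μ U) : μ Set.univ = 0 := by
  rcases Set.univ.eq_empty_or_nonempty with hX | hX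
  · rw [hX, measure_empty]
  obtain ⟨O₁, O₂, -, hO₂, -, -, -, -, hdisj, hsub₁, hsub₂⟩ :=
    h Set.univ isOpen_univ hX Set.univ isClosed_univ subset_rfl
  have hdouble : μ Set.univ + μ Set.univ ≤ μ Set.univ + 0 :=
    calc μ Set.univ + μ Set.univ ≤ μ O₁ + μ O₂ :=
          add_le_add (hsub₁.measure_le hμ) (hsub₂.measure_le hμ)
      _ = μ (O₁ ∪ O₂) := (measure_union hdisj hO₂.measurableSet).symm
      _ ≤ μ Set.univ + 0 := by rw [add_zero]; exact measure_mono (Set.subset_univ _)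
  exact nonpos_iff_eq_zero.mp (ENNReal.le_of_add_le_add_left (measure_ne_top μ _) hdouble)

end

theorem paradoxicalComparison_no_invariant_measure_general
    {G X : Type*} [Group G] [TopologicalSpace X]
    [MulAction G X] [ContinuousConstSMul G X]
    [MeasurableSpace X] [BorelSpace X]
    (h : ParadoxicalComparison G (X := X)) :
    ¬ ∃ μ : MeasureTheory.Measure X, MeasureTheory.IsProbabilityMeasure μ ∧ μ.Regular ∧
        ∀ (g : G) (A : Set X), μ (g • A) = μ A := by
  rintro ⟨μ, hprob, -, hμ⟩
  have hzero := h.measure_univ_eq_zero fun g U _ => hμ g U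
  rw [measure_univ] at hzero
  exact one_ne_zero hzero

theorem paradoxicalComparison_no_invariant_measure
    {G X : Type*} [Group G] [TopologicalSpace X] [CompactSpace X] [T2Space X]
    [MulAction G X] [ContinuousConstSMul G X]
    [MeasurableSpace X] [BorelSpace X]
    (h : ParadoxicalComparison G (X := X)) :
    ¬ ∃ μ : MeasureTheory.Measure X, MeasureTheory.IsProbabilityMeasure μ ∧ μ.Regular ∧
        ∀ (g : G) (A : Set X), μ (g • A) = μ A :=
  paradoxicalComparison_no_invariant_measure_general h
end

section
/- Let G be a group acting by homeomorphisms on a compact Hausdorff space X such that there is no G-invariant regular Borel probability measure on X. If the action has dynamical comparison, then the action is minimal: every orbit is dense. -/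
open Pointwise MeasureTheory

theorem Subeq.exists_smul_mem {G X : Type*} [Group G] [MulAction G X] [TopologicalSpace X]
    {F O : Set X} (h : Subeq G F O) {x : X} (hx : x ∈ F) : ∃ g : G, g • x ∈ O := by
  obtain ⟨n, U, g, -, hcover, hmaps, -⟩ := h
  obtain ⟨i, hi⟩ := Set.mem_iUnion.mp (hcover hx)
  exact ⟨g i, hmaps i (Set.smul_mem_smul_set hi)⟩

theorem dense_orbit_of_forall_subeq_univ {G X : Type*} [Group G] [MulAction G X]
    [TopologicalSpace X] (h : ∀ O : Set X, IsOpen O → O.Nonempty → Subeq G Set.univ O)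
    (x : X) : Dense (MulAction.orbit G x) := by
  refine dense_iff_inter_open.mpr fun O hO hne => ?_
  obtain ⟨g, hg⟩ := (h O hO hne).exists_smul_mem (Set.mem_univ x)
  exact ⟨g • x, hg, MulAction.mem_orbit x g⟩

theorem dynamicalComparison_minimal_of_no_invariant_measure_general
    {G X : Type*} [Group G] [TopologicalSpace X]
    [MulAction G X] [MeasurableSpace X]
    (hnom : ¬ ∃ μ : Measure X, IsProbabilityMeasure μ ∧ μ.Regular ∧
        ∀ (g : G) (A : Set X), μ (g • A) = μ A)
    (hdc : ∀ V O : Set X, IsOpen V → IsOpen O → O.Nonempty →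
      (∀ μ : Measure X, IsProbabilityMeasure μ → μ.Regular →
        (∀ (g : G) (A : Set X), μ (g • A) = μ A) → μ V < μ O) →
      ∀ F : Set X, IsClosed F → F ⊆ V → Subeq G F O) :
    ∀ x : X, Dense (MulAction.orbit G x) := by
  refine dense_orbit_of_forall_subeq_univ fun O hO hne => ?_
  refine hdc Set.univ O isOpen_univ hO hne ?_ Set.univ isClosed_univ subset_rfl
  exact fun μ hprob hreg hinv => absurd ⟨μ, hprob, hreg, hinv⟩ hnom

theorem dynamicalComparison_minimal_of_no_invariant_measure
    {G X : Type*} [Group G] [TopologicalSpace X] [CompactSpace X] [T2Space X]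
    [MulAction G X] [ContinuousConstSMul G X] [MeasurableSpace X] [BorelSpace X]
    (hnom : ¬ ∃ μ : Measure X, IsProbabilityMeasure μ ∧ μ.Regular ∧
        ∀ (g : G) (A : Set X), μ (g • A) = μ A)
    (hdc : ∀ V O : Set X, IsOpen V → IsOpen O → O.Nonempty →
      (∀ μ : Measure X, IsProbabilityMeasure μ → μ.Regular →
        (∀ (g : G) (A : Set X), μ (g • A) = μ A) → μ V < μ O) →
      ∀ F : Set X, IsClosed F → F ⊆ V → Subeq G F O) :
    ∀ x : X, Dense (MulAction.orbit G x) :=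
  dynamicalComparison_minimal_of_no_invariant_measure_general hnom hdc
end

section
/- Let G be a group acting by homeomorphisms on an infinite compact Hausdorff space X. If the action is a strong boundary action (for every closed F ⊊ X and nonempty open O there is g ∈ G with gF ⊆ O), then the action is 2-filling: for any nonempty open U₁, U₂ there exist g₁, g₂ ∈ G with g₁U₁ ∪ g₂U₂ = X. -/
open Pointwise

theorem Set.smul_union_smul_eq_univ_of_smul_compl_subset {G X : Type*} [Group G] [MulAction G X]
    {U₁ U₂ V₁ V₂ : Set X} {g₁ g₂ : G} (h₁ : g₁ • U₁ᶜ ⊆ V₁) (h₂ : g₂ • U₂ᶜ ⊆ V₂)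
    (hV : Disjoint V₁ V₂) : g₁ • U₁ ∪ g₂ • U₂ = Set.univ := by
  rw [Set.smul_set_compl] at h₁ h₂
  rw [← Set.compl_empty_iff, Set.compl_union, ← Set.subset_empty_iff, ← hV.inter_eq]
  exact Set.inter_subset_inter h₁ h₂

theorem strongBoundary_two_filling_general
    {G X : Type*} [Group G] [TopologicalSpace X] [T2Space X] [Infinite X]
    [MulAction G X]
    (hsb : ∀ F : Set X, IsClosed F → F ≠ Set.univ → ∀ O : Set X, IsOpen O → O.Nonempty →
      ∃ g : G, g • F ⊆ O) :
    ∀ U₁ U₂ : Set X, IsOpen U₁ → U₁.Nonempty → IsOpen U₂ → U₂.Nonempty →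
      ∃ g₁ g₂ : G, g₁ • U₁ ∪ g₂ • U₂ = Set.univ := by
  intro U₁ U₂ hU₁ hne₁ hU₂ hne₂
  obtain ⟨x, y, hxy⟩ := exists_pair_ne X
  obtain ⟨V₁, V₂, hV₁, hV₂, hxV₁, hyV₂, hV⟩ := t2_separation hxy
  obtain ⟨g₁, hg₁⟩ :=
    hsb U₁ᶜ hU₁.isClosed_compl (Set.compl_ne_univ.mpr hne₁) V₁ hV₁ ⟨x, hxV₁⟩
  obtain ⟨g₂, hg₂⟩ :=
    hsb U₂ᶜ hU₂.isClosed_compl (Set.compl_ne_univ.mpr hne₂) V₂ hV₂ ⟨y, hyV₂⟩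
  exact ⟨g₁, g₂, Set.smul_union_smul_eq_univ_of_smul_compl_subset hg₁ hg₂ hV⟩

theorem strongBoundary_two_filling
    {G X : Type*} [Group G] [TopologicalSpace X] [CompactSpace X] [T2Space X] [Infinite X]
    [MulAction G X] [ContinuousConstSMul G X]
    (hsb : ∀ F : Set X, IsClosed F → F ≠ Set.univ → ∀ O : Set X, IsOpen O → O.Nonempty →
      ∃ g : G, g • F ⊆ O) :
    ∀ U₁ U₂ : Set X, IsOpen U₁ → U₁.Nonempty → IsOpen U₂ → U₂.Nonempty →
      ∃ g₁ g₂ : G, g₁ • U₁ ∪ g₂ • U₂ = Set.univ :=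
  strongBoundary_two_filling_general hsb
end

section
/- Let G be a group acting by homeomorphisms on a compact Hausdorff space X with weak paradoxical comparison. Let F be a closed subset and O a nonempty open subset of X such that for every closed G-invariant subset Y of X, F ∩ Y ≠ ∅ implies O ∩ Y ≠ ∅. Then F ≺ O. -/
open Pointwise

/-- Weak paradoxical comparison: every closed set contained in the union of the
translates of a nonempty open set `O` is subequivalent to `O`. -/
def WeakParadoxicalComparison (G : Type*) {X : Type*} [Group G] [MulAction G X]
    [TopologicalSpace X] : Prop :=
  ∀ F O : Set X, IsClosed F → IsOpen O → O.Nonempty → F ⊆ ⋃ g : G, g • O → Subeq G F O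

/-! A point `x ∈ F` lies in the closed invariant set `closure (G • x)`, which therefore meets `O`;
as `O` is open, already the orbit `G • x` meets `O`, i.e. `x ∈ G • O`. So `F ⊆ G • O`, and weak
paradoxical comparison gives `F ≺ O`. -/

section OrbitClosure

variable {G X : Type*} [Group G] [MulAction G X]

theorem mem_iUnion_smul_iff_orbit_inter_nonempty {x : X} {O : Set X} :
    x ∈ ⋃ g : G, g • O ↔ (MulAction.orbit G x ∩ O).Nonempty := by
  simp only [Set.mem_iUnion, Set.mem_smul_set_iff_inv_smul_mem]
  constructor
  · rintro ⟨g, hg⟩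
    exact ⟨g⁻¹ • x, MulAction.mem_orbit x g⁻¹, hg⟩
  · rintro ⟨_, ⟨g, rfl⟩, hgx⟩
    exact ⟨g⁻¹, by rwa [inv_inv]⟩

variable [TopologicalSpace X] [ContinuousConstSMul G X]

theorem smul_closure_orbit (g : G) (x : X) :
    g • closure (MulAction.orbit G x) = closure (MulAction.orbit G x) := by
  rw [← closure_smul, MulAction.smul_orbit]

theorem subset_iUnion_smul_of_meets_invariant_subsets {F O : Set X} (hO : IsOpen O)
    (hmeet : ∀ Y : Set X, IsClosed Y → (∀ g : G, g • Y = Y) →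
      (F ∩ Y).Nonempty → (O ∩ Y).Nonempty) :
    F ⊆ ⋃ g : G, g • O := by
  intro x hx
  have hxY : x ∈ closure (MulAction.orbit G x) := subset_closure (MulAction.mem_orbit_self x)
  have hOY := hmeet _ isClosed_closure (smul_closure_orbit · x) ⟨x, hx, hxY⟩
  rw [Set.inter_comm, closure_inter_open_nonempty_iff hO] at hOY
  exact mem_iUnion_smul_iff_orbit_inter_nonempty.mpr hOY

end OrbitClosure

theorem subeq_of_meets_invariant_subsets_general
    {G X : Type*} [Group G] [TopologicalSpace X]
    [MulAction G X] [ContinuousConstSMul G X]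
    (hwpc : WeakParadoxicalComparison G (X := X))
    (F O : Set X) (hF : IsClosed F) (hO : IsOpen O) (hOne : O.Nonempty)
    (hmeet : ∀ Y : Set X, IsClosed Y → (∀ g : G, g • Y = Y) →
      (F ∩ Y).Nonempty → (O ∩ Y).Nonempty) :
    Subeq G F O :=
  hwpc F O hF hO hOne (subset_iUnion_smul_of_meets_invariant_subsets hO hmeet)

theorem subeq_of_meets_invariant_subsets
    {G X : Type*} [Group G] [TopologicalSpace X] [CompactSpace X] [T2Space X]
    [MulAction G X] [ContinuousConstSMul G X]
    (hwpc : WeakParadoxicalComparison G (X := X))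
    (F O : Set X) (hF : IsClosed F) (hO : IsOpen O) (hOne : O.Nonempty)
    (hmeet : ∀ Y : Set X, IsClosed Y → (∀ g : G, g • Y = Y) →
      (F ∩ Y).Nonempty → (O ∩ Y).Nonempty) :
    Subeq G F O :=
  subeq_of_meets_invariant_subsets_general hwpc F O hF hO hOne hmeet
end

section
/- Let β: G ↷ X be a minimal topologically free action on a compact Hausdorff space X (for each nontrivial g, the fixed point set of g has empty interior), and let α: G ↷ X × Y be the product action with the trivial action on compact Hausdorff Y. Then α is essentially free: its restriction to every nonempty G-invariant closed subset is topologically free. -/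
/-! If `(x, y)` lies in a closed set `M` invariant under `g • (x, y) = (g • x, y)`, then the
slice `{x' | (x', y) ∈ M}` is closed and contains the dense orbit of `x`, so it is all of `X`.
Hence an open set `U` meeting `M` at `(x, y)` contains `V × {y} ⊆ U ∩ M` for an open `V ∋ x`,
and if `g` fixes the first coordinate on `U ∩ M`, then `V` lies in the fixed set of `g`, which
has empty interior. -/

open Set MulAction

section Slice

variable {X Y : Type*} [TopologicalSpace X] [TopologicalSpace Y]

theorem prodMk_mem_of_dense_orbit {G : Type*} [Monoid G] [MulAction G X]
    {M : Set (X × Y)} (hM : IsClosed M)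
    (hinv : ∀ g : G, MapsTo (fun p : X × Y => (g • p.1, p.2)) M M)
    {x : X} (hx : Dense (orbit G x)) {y : Y} (hxy : (x, y) ∈ M) (x' : X) : (x', y) ∈ M := by
  have hslice : IsClosed {x' : X | (x', y) ∈ M} := hM.preimage (Continuous.prodMk_left y)
  have horbit : orbit G x ⊆ {x' : X | (x', y) ∈ M} := by
    rintro _ ⟨g, rfl⟩
    exact hinv g hxy
  exact hslice.closure_subset_iff.2 horbit (hx x')

theorem mem_interior_of_prodMk_mem_inter_subset {U M : Set (X × Y)} {s : Set X} (hU : IsOpen U)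
    {y : Y} (hM : ∀ x' : X, (x', y) ∈ M) (hsub : U ∩ M ⊆ Prod.fst ⁻¹' s) {x : X}
    (hxy : (x, y) ∈ U) : x ∈ interior s :=
  mem_interior.2
    ⟨_, fun x' hx' => hsub ⟨hx', hM x'⟩, hU.preimage (Continuous.prodMk_left y), hxy⟩

end Slice

theorem product_action_essentially_free_general
    {G X : Type*} [Group G] [TopologicalSpace X]
    [MulAction G X]
    (hmin : ∀ x : X, Dense (MulAction.orbit G x))
    (hfree : ∀ g : G, g ≠ 1 → interior {x : X | g • x = x} = ∅)
    (Y : Type*) [TopologicalSpace Y] :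
    ∀ M : Set (X × Y), IsClosed M → M.Nonempty →
      (∀ g : G, (fun p : X × Y => (g • p.1, p.2)) '' M = M) →
      ∀ g : G, g ≠ 1 → ∀ U : Set (X × Y), IsOpen U →
        U ∩ M ⊆ {p : X × Y | g • p.1 = p.1} → U ∩ M = ∅ := by
  intro M hM _ hinv g hg U hU hsub
  refine eq_empty_of_forall_notMem fun ⟨x, y⟩ ⟨hxyU, hxyM⟩ => ?_
  have hslice : ∀ x' : X, (x', y) ∈ M :=
    prodMk_mem_of_dense_orbit hM (fun g => mapsTo_iff_image_subset.2 (hinv g).subset)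
      (hmin x) hxyM
  have hx : x ∈ interior {x : X | g • x = x} :=
    mem_interior_of_prodMk_mem_inter_subset (s := {x | g • x = x}) hU hslice hsub hxyU
  rw [hfree g hg] at hx
  exact hx

theorem product_action_essentially_free
    {G X : Type*} [Group G] [TopologicalSpace X] [CompactSpace X] [T2Space X]
    [MulAction G X] [ContinuousConstSMul G X]
    (hmin : ∀ x : X, Dense (MulAction.orbit G x))
    (hfree : ∀ g : G, g ≠ 1 → interior {x : X | g • x = x} = ∅)
    (Y : Type*) [TopologicalSpace Y] [CompactSpace Y] [T2Space Y] :
    ∀ M : Set (X × Y), IsClosed M → M.Nonempty →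
      (∀ g : G, (fun p : X × Y => (g • p.1, p.2)) '' M = M) →
      ∀ g : G, g ≠ 1 → ∀ U : Set (X × Y), IsOpen U →
        U ∩ M ⊆ {p : X × Y | g • p.1 = p.1} → U ∩ M = ∅ :=
  product_action_essentially_free_general hmin hfree Y
end

section
/- Let G be a group acting on the Cantor set X such that the action is minimal, and suppose there exists a nontrivial state on the type semigroup W(X,G) (an order-preserving additive map f: W(X,G) → [0,∞] taking some value different from 0 and ∞). Then there exists a G-invariant finitely additive probability measure defined on the clopen subsets of X. -/
open Pointwise

/-- The equivalence relation defining the type semigroup `W(X,G)`: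
`f ∼ g` iff `f` decomposes as a finite sum `∑ hᵢ` with `g = ∑ αₛᵢ(hᵢ)`,
where `αₛ(h)(x) = h(s⁻¹ • x)`. -/
def TypeRel (G : Type*) {X : Type*} [Group G] [TopologicalSpace X] [MulAction G X]
    [ContinuousConstSMul G X] (f g : C(X, ℕ)) : Prop :=
  ∃ (n : ℕ) (h : Fin n → C(X, ℕ)) (s : Fin n → G),
    (∑ i, h i) = f ∧
      (∑ i, (h i).comp ⟨fun x => (s i)⁻¹ • x, continuous_const_smul _⟩) = g

/-!
Normalise the state by its value on the constant function `1`: `m A = μ 1_A / μ 1`.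
Additivity and invariance of `μ` make `m` a finitely additive invariant measure, so the only
point is that `0 < μ 1 < ∞`. If `μ f ∉ {0, ∞}`, then `f ≤ N • 1` for some `N` by compactness,
so `μ 1 ≠ 0`; and by minimality finitely many translates of the open set `{f ≠ 0}` cover `X`,
so `1` is dominated by a finite sum of translates of `f`, whence `μ 1 ≤ |I| • μ f < ∞`.
-/

open scoped ENNReal

section ClopenIndicator

variable {X : Type*} [TopologicalSpace X]

noncomputable def clopenIndicator (A : Set X) (hA : IsClopen A) : C(X, ℕ) :=
  ⟨A.indicator 1, continuous_indicator (by simp [hA]) continuous_const.continuousOn⟩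

lemma clopenIndicator_univ : clopenIndicator (Set.univ : Set X) isClopen_univ = 1 := by
  ext x
  simp [clopenIndicator]

lemma clopenIndicator_union {A B : Set X} (hA : IsClopen A) (hB : IsClopen B)
    (hAB : Disjoint A B) :
    clopenIndicator (A ∪ B) (hA.union hB) = clopenIndicator A hA + clopenIndicator B hB := by
  ext x
  simp [clopenIndicator, Set.indicator_union_of_disjoint hAB]

open Classical in
noncomputable def normalizedMass (μ : C(X, ℕ) → ℝ≥0∞) (A : Set X) : ℝ≥0∞ :=
  if hA : IsClopen A then μ (clopenIndicator A hA) / μ 1 else 0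

lemma normalizedMass_of_isClopen {μ : C(X, ℕ) → ℝ≥0∞} {A : Set X} (hA : IsClopen A) :
    normalizedMass μ A = μ (clopenIndicator A hA) / μ 1 :=
  dif_pos hA

lemma normalizedMass_univ {μ : C(X, ℕ) → ℝ≥0∞} (h0 : μ 1 ≠ 0) (htop : μ 1 ≠ ⊤) :
    normalizedMass μ Set.univ = 1 := by
  rw [normalizedMass_of_isClopen isClopen_univ, clopenIndicator_univ, ENNReal.div_self h0 htop]

lemma normalizedMass_union {μ : C(X, ℕ) → ℝ≥0∞} (hadd : ∀ f g, μ (f + g) = μ f + μ g)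
    {A B : Set X} (hA : IsClopen A) (hB : IsClopen B) (hAB : Disjoint A B) :
    normalizedMass μ (A ∪ B) = normalizedMass μ A + normalizedMass μ B := by
  rw [normalizedMass_of_isClopen (hA.union hB), normalizedMass_of_isClopen hA,
    normalizedMass_of_isClopen hB, clopenIndicator_union hA hB hAB, hadd, ENNReal.add_div]

end ClopenIndicator

section Translate

variable {G X : Type*} [Group G] [TopologicalSpace X] [MulAction G X] [ContinuousConstSMul G X]

/-- `αₛ` in the notation of `TypeRel`. -/
def smulTranslate (s : G) (f : C(X, ℕ)) : C(X, ℕ) :=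
  f.comp ⟨fun x => s⁻¹ • x, continuous_const_smul _⟩

@[simp]
lemma smulTranslate_apply (s : G) (f : C(X, ℕ)) (x : X) : smulTranslate s f x = f (s⁻¹ • x) := rfl

lemma typeRel_refl (f : C(X, ℕ)) : TypeRel G f f :=
  ⟨1, fun _ => f, fun _ => 1, by simp, by ext; simp⟩

lemma typeRel_smulTranslate (s : G) (f : C(X, ℕ)) : TypeRel G f (smulTranslate s f) :=
  ⟨1, fun _ => f, fun _ => s, by simp, by simp [smulTranslate]⟩

lemma monotone_of_typeRel_le {μ : C(X, ℕ) → ℝ≥0∞}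
    (hmono : ∀ f g : C(X, ℕ), (∃ c h : C(X, ℕ), f + c = h ∧ TypeRel G h g) → μ f ≤ μ g) :
    Monotone μ := by
  intro p q hpq
  refine hmono p q ⟨q - p, q, ?_, typeRel_refl q⟩
  ext x
  exact Nat.add_sub_cancel' (ContinuousMap.le_def.1 hpq x)

lemma smulTranslate_clopenIndicator (s : G) {A : Set X} (hA : IsClopen A) :
    smulTranslate s (clopenIndicator A hA) =
      clopenIndicator (s • A) ⟨hA.1.smul s, hA.2.smul s⟩ := by
  ext x
  classical
  simp only [smulTranslate_apply, clopenIndicator, ContinuousMap.coe_mk, Set.indicator_apply,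
    Set.mem_smul_set_iff_inv_smul_mem, Pi.one_apply]

lemma exists_one_le_sum_smulTranslate [CompactSpace X] [MulAction.IsMinimal G X] {f : C(X, ℕ)}
    (hf : f ≠ 0) : ∃ I : Finset G, 1 ≤ ∑ s ∈ I, smulTranslate s f := by
  have hopen : IsOpen {x | f x ≠ 0} :=
    f.continuous.isOpen_preimage {n | n ≠ 0} (isOpen_discrete _)
  have hne : {x | f x ≠ 0}.Nonempty := by
    by_contra! h
    exact hf (ContinuousMap.ext fun x => by simpa using Set.eq_empty_iff_forall_notMem.1 h x)
  obtain ⟨I, hI⟩ := isCompact_univ.exists_finite_cover_smul G hopen hne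
  refine ⟨I, ContinuousMap.le_def.2 fun x => ?_⟩
  obtain ⟨s, hs, hx⟩ := Set.mem_iUnion₂.1 (hI (Set.mem_univ x))
  calc (1 : C(X, ℕ)) x = 1 := rfl
    _ ≤ smulTranslate s f x := Nat.one_le_iff_ne_zero.2 (Set.mem_smul_set_iff_inv_smul_mem.1 hx)
    _ ≤ (∑ t ∈ I, smulTranslate t f) x := by
      rw [ContinuousMap.sum_apply]
      exact Finset.single_le_sum (f := fun t => smulTranslate t f x) (fun _ _ => Nat.zero_le _) hs

lemma normalizedMass_smul {μ : C(X, ℕ) → ℝ≥0∞} (hinv : ∀ (s : G) f, μ (smulTranslate s f) = μ f)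
    (s : G) {A : Set X} (hA : IsClopen A) : normalizedMass μ (s • A) = normalizedMass μ A := by
  rw [normalizedMass_of_isClopen ⟨hA.1.smul s, hA.2.smul s⟩, normalizedMass_of_isClopen hA,
    ← smulTranslate_clopenIndicator, hinv]

end Translate

lemma ContinuousMap.exists_le_nsmul_one {X : Type*} [TopologicalSpace X] [CompactSpace X]
    (f : C(X, ℕ)) : ∃ N : ℕ, f ≤ N • 1 := by
  obtain ⟨N, hN⟩ := (isCompact_range f.continuous).finite_of_discrete.bddAbove
  exact ⟨N, ContinuousMap.le_def.2 fun x => by simpa using hN ⟨x, rfl⟩⟩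

section State

variable {X : Type*} [TopologicalSpace X] [CompactSpace X] (μ : C(X, ℕ) →+ ℝ≥0∞)

lemma state_one_ne_zero (hμ : Monotone μ) {f : C(X, ℕ)} (hf : μ f ≠ 0) : μ 1 ≠ 0 := by
  obtain ⟨N, hN⟩ := f.exists_le_nsmul_one
  intro h1
  exact hf (le_antisymm ((hμ hN).trans_eq (by rw [map_nsmul, h1, smul_zero])) bot_le)

lemma state_one_ne_top {G : Type*} [Group G] [MulAction G X] [ContinuousConstSMul G X]
    [MulAction.IsMinimal G X] (hinv : ∀ (s : G) f, μ (smulTranslate s f) = μ f) (hμ : Monotone μ)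
    {f : C(X, ℕ)} (hf0 : μ f ≠ 0) (hf : μ f ≠ ⊤) : μ 1 ≠ ⊤ := by
  obtain ⟨I, hI⟩ := exists_one_le_sum_smulTranslate (G := G) (f := f) (by rintro rfl; simp at hf0)
  have hsum : μ (∑ s ∈ I, smulTranslate s f) = ∑ _s ∈ I, μ f := by simp only [map_sum, hinv]
  exact ne_top_of_le_ne_top (hsum ▸ ENNReal.sum_ne_top.2 fun _ _ => hf) (hμ hI)

end State

theorem nontrivial_state_gives_invariant_mean_general
    {G X : Type*} [Group G] [TopologicalSpace X] [CompactSpace X]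
    [MulAction G X] [ContinuousConstSMul G X]
    (hmin : ∀ x : X, Dense (MulAction.orbit G x))
    (μ : C(X, ℕ) → ENNReal)
    (hadd : ∀ f g : C(X, ℕ), μ (f + g) = μ f + μ g)
    (hinvr : ∀ f g : C(X, ℕ), TypeRel G f g → μ f = μ g)
    (hmono : ∀ f g : C(X, ℕ), (∃ c h : C(X, ℕ), f + c = h ∧ TypeRel G h g) → μ f ≤ μ g)
    (hnontriv : ∃ f : C(X, ℕ), μ f ≠ 0 ∧ μ f ≠ ⊤) :
    ∃ m : Set X → ENNReal, m Set.univ = 1 ∧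
      (∀ A B : Set X, IsClopen A → IsClopen B → Disjoint A B → m (A ∪ B) = m A + m B) ∧
      (∀ (g : G) (A : Set X), IsClopen A → m (g • A) = m A) := by
  obtain ⟨f, hf0, hftop⟩ := hnontriv
  have hμ : Monotone μ := monotone_of_typeRel_le hmono
  have hμ0 : μ 0 = 0 := by
    have h0top : μ 0 ≠ ⊤ :=
      ne_top_of_le_ne_top hftop (hμ (ContinuousMap.le_def.2 fun _ => Nat.zero_le _))
    exact (ENNReal.add_right_inj h0top).1 (by simpa using (hadd 0 0).symm)
  let ν : C(X, ℕ) →+ ℝ≥0∞ := ⟨⟨μ, hμ0⟩, hadd⟩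
  have : MulAction.IsMinimal G X := ⟨hmin⟩
  have h1 : μ 1 ≠ 0 := state_one_ne_zero ν hμ hf0
  have hinv : ∀ (s : G) f, μ (smulTranslate s f) = μ f :=
    fun s f => (hinvr _ _ (typeRel_smulTranslate s f)).symm
  have h1' : μ 1 ≠ ⊤ := state_one_ne_top ν hinv hμ hf0 hftop
  exact ⟨normalizedMass μ, normalizedMass_univ h1 h1',
    fun A B hA hB hAB => normalizedMass_union hadd hA hB hAB,
    fun s A hA => normalizedMass_smul hinv s hA⟩

/-- A nontrivial state on the type semigroup of a minimal action on the Cantor set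
induces a G-invariant finitely additive probability measure on the clopen subsets. -/
theorem nontrivial_state_gives_invariant_mean
    {G X : Type*} [Group G] [TopologicalSpace X] [CompactSpace X]
    [TopologicalSpace.MetrizableSpace X] [TotallyDisconnectedSpace X]
    [MulAction G X] [ContinuousConstSMul G X]
    (hperf : Perfect (Set.univ : Set X))
    (hmin : ∀ x : X, Dense (MulAction.orbit G x))
    (μ : C(X, ℕ) → ENNReal)
    (hadd : ∀ f g : C(X, ℕ), μ (f + g) = μ f + μ g)
    (hinvr : ∀ f g : C(X, ℕ), TypeRel G f g → μ f = μ g)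
    (hmono : ∀ f g : C(X, ℕ), (∃ c h : C(X, ℕ), f + c = h ∧ TypeRel G h g) → μ f ≤ μ g)
    (hnontriv : ∃ f : C(X, ℕ), μ f ≠ 0 ∧ μ f ≠ ⊤) :
    ∃ m : Set X → ENNReal, m Set.univ = 1 ∧
      (∀ A B : Set X, IsClopen A → IsClopen B → Disjoint A B → m (A ∪ B) = m A + m B) ∧
      (∀ (g : G) (A : Set X), IsClopen A → m (g • A) = m A) :=
  nontrivial_state_gives_invariant_mean_general hmin μ hadd hinvr hmono hnontriv
end

section
/- Let G be a group acting by homeomorphisms on a compact Hausdorff space X, and suppose there is no G-invariant regular Borel probability measure on X and the action has dynamical comparison. Then the action has paradoxical comparison: for every nonempty open O and every closed F ⊆ O there exist disjoint nonempty open O₁, O₂ ⊆ O with F ≺ O₁ and F ≺ O₂. -/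
/-!
Without invariant measures, dynamical comparison gives `F ≺ W` for every closed `F` inside an
open `V` and every nonempty open `W`. Since no invariant measure exists, `X` has at least two
points (otherwise a Dirac mass would be invariant), so `X ≺ O` forces `O` to have two points as
well; separating them inside `O` gives the disjoint sets `O₁, O₂`, and `F ≺ O₁`, `F ≺ O₂` by
comparison once more.
-/

open Pointwise MeasureTheory

theorem Subeq.subsingleton {G X : Type*} [Group G] [MulAction G X] [TopologicalSpace X]
    {F O : Set X} (h : Subeq G F O) (hO : O.Subsingleton) : F.Subsingleton := by
  obtain ⟨n, U, g, -, hcov, hsub, hdisj⟩ := h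
  intro y hy z hz
  obtain ⟨i, hi⟩ := Set.mem_iUnion.1 (hcov hy)
  obtain ⟨j, hj⟩ := Set.mem_iUnion.1 (hcov hz)
  have hyU : g i • y ∈ g i • U i := Set.smul_mem_smul_set hi
  have hzU : g j • z ∈ g j • U j := Set.smul_mem_smul_set hj
  have hyz : g i • y = g j • z := hO (hsub i hyU) (hsub j hzU)
  rcases eq_or_ne i j with rfl | hij
  · exact smul_left_cancel (g i) hyz
  · rw [hyz] at hyU
    exact absurd (hdisj hij) (Set.not_disjoint_iff.2 ⟨_, hyU, hzU⟩)

theorem exists_invariant_regular_probabilityMeasure_of_subsingleton (G : Type*)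
    {X : Type*} [Group G] [MulAction G X] [TopologicalSpace X] [MeasurableSpace X]
    [Subsingleton X] (x : X) :
    ∃ μ : Measure X, IsProbabilityMeasure μ ∧ μ.Regular ∧
      ∀ (g : G) (A : Set X), μ (g • A) = μ A := by
  refine ⟨Measure.dirac x, inferInstance, inferInstance, fun g A => ?_⟩
  rcases A.subsingleton_of_subsingleton.eq_empty_or_singleton with rfl | ⟨a, rfl⟩
  · rw [Set.smul_set_empty]
  · rw [Set.smul_set_singleton, Subsingleton.elim (g • a) a]

theorem Set.Nontrivial.exists_disjoint_open_nonempty_subsets {X : Type*} [TopologicalSpace X]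
    [T2Space X] {O : Set X} (hO : IsOpen O) (hnt : O.Nontrivial) :
    ∃ O₁ O₂ : Set X, IsOpen O₁ ∧ IsOpen O₂ ∧ O₁.Nonempty ∧ O₂.Nonempty ∧
      O₁ ⊆ O ∧ O₂ ⊆ O ∧ Disjoint O₁ O₂ := by
  obtain ⟨a, ha, b, hb, hab⟩ := hnt
  obtain ⟨U, V, hU, hV, haU, hbV, hUV⟩ := t2_separation hab
  exact ⟨O ∩ U, O ∩ V, hO.inter hU, hO.inter hV, ⟨a, ha, haU⟩, ⟨b, hb, hbV⟩,
    Set.inter_subset_left, Set.inter_subset_left,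
    hUV.mono Set.inter_subset_right Set.inter_subset_right⟩

theorem dynamicalComparison_implies_paradoxicalComparison_general
    {G X : Type*} [Group G] [TopologicalSpace X] [T2Space X]
    [MulAction G X] [MeasurableSpace X]
    (hnom : ¬ ∃ μ : Measure X, IsProbabilityMeasure μ ∧ μ.Regular ∧
        ∀ (g : G) (A : Set X), μ (g • A) = μ A)
    (hdc : ∀ V O : Set X, IsOpen V → IsOpen O → O.Nonempty →
      (∀ μ : Measure X, IsProbabilityMeasure μ → μ.Regular →
        (∀ (g : G) (A : Set X), μ (g • A) = μ A) → μ V < μ O) →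
      ∀ F : Set X, IsClosed F → F ⊆ V → Subeq G F O) :
    ∀ O : Set X, IsOpen O → O.Nonempty → ∀ F : Set X, IsClosed F → F ⊆ O →
      ∃ O₁ O₂ : Set X, IsOpen O₁ ∧ IsOpen O₂ ∧ O₁.Nonempty ∧ O₂.Nonempty ∧
        O₁ ⊆ O ∧ O₂ ⊆ O ∧ Disjoint O₁ O₂ ∧ Subeq G F O₁ ∧ Subeq G F O₂ := by
  intro O hO hOne F hF hFO
  have comparison : ∀ V W : Set X, IsOpen V → IsOpen W → W.Nonempty →
      ∀ F : Set X, IsClosed F → F ⊆ V → Subeq G F W := fun V W hV hW hWne =>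
    hdc V W hV hW hWne fun μ hμ hreg hinv => (hnom ⟨μ, hμ, hreg, hinv⟩).elim
  have hX : Nontrivial X := by
    by_contra hX
    have := not_nontrivial_iff_subsingleton.1 hX
    exact hnom (exists_invariant_regular_probabilityMeasure_of_subsingleton G hOne.some)
  have hOnt : O.Nontrivial := by
    refine Set.not_subsingleton_iff.1 fun hOs => (Set.nontrivial_univ (α := X)).not_subsingleton ?_
    exact (comparison _ O isOpen_univ hO hOne _ isClosed_univ subset_rfl).subsingleton hOs
  obtain ⟨O₁, O₂, hO₁, hO₂, hne₁, hne₂, hsub₁, hsub₂, hdisj⟩ :=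
    hOnt.exists_disjoint_open_nonempty_subsets hO
  exact ⟨O₁, O₂, hO₁, hO₂, hne₁, hne₂, hsub₁, hsub₂, hdisj,
    comparison O O₁ hO hO₁ hne₁ F hF hFO, comparison O O₂ hO hO₂ hne₂ F hF hFO⟩

theorem dynamicalComparison_implies_paradoxicalComparison
    {G X : Type*} [Group G] [TopologicalSpace X] [CompactSpace X] [T2Space X]
    [MulAction G X] [ContinuousConstSMul G X] [MeasurableSpace X] [BorelSpace X]
    (hnom : ¬ ∃ μ : Measure X, IsProbabilityMeasure μ ∧ μ.Regular ∧
        ∀ (g : G) (A : Set X), μ (g • A) = μ A)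
    (hdc : ∀ V O : Set X, IsOpen V → IsOpen O → O.Nonempty →
      (∀ μ : Measure X, IsProbabilityMeasure μ → μ.Regular →
        (∀ (g : G) (A : Set X), μ (g • A) = μ A) → μ V < μ O) →
      ∀ F : Set X, IsClosed F → F ⊆ V → Subeq G F O) :
    ∀ O : Set X, IsOpen O → O.Nonempty → ∀ F : Set X, IsClosed F → F ⊆ O →
      ∃ O₁ O₂ : Set X, IsOpen O₁ ∧ IsOpen O₂ ∧ O₁.Nonempty ∧ O₂.Nonempty ∧
        O₁ ⊆ O ∧ O₂ ⊆ O ∧ Disjoint O₁ O₂ ∧ Subeq G F O₁ ∧ Subeq G F O₂ :=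
  dynamicalComparison_implies_paradoxicalComparison_general hnom hdc
end
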